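/- Correctness of the embedding of the simply-typed λ-calculus: (1) if Γ ⊢ M ⇑ A (M is canonical of type A in the simply-typed λ-calculus), then Γ⁺; ·; · ⊢ M⁻ ⇑ A⁻ in the strict λ-calculus; and (2) if Γ ⊢ M ↓ A (M is atomic of type A in the simply-typed λ-calculus), then Γ⁺; ·; · ⊢ M⁺ ↓ A⁺ in the strict λ-calculus. -/

import Mathlib

/- A strict λ-calculus with strict (1), irrelevant (0) and unrestricted (u)
   function spaces, in locally nameless representation.  Contexts are finite
   sets of (variable name, type) declarations, split into three zones
   Γ (unrestricted); Ω (irrelevant); Δ (strict). -/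

/-- Labels `k ::= 1 | 0 | u`. -/
inductive Lab : Type
  | one
  | zero
  | un
deriving DecidableEq

/-- Types `A ::= a | A₁ →ᵏ A₂` over atomic types `a` (names in ℕ). -/
inductive Ty : Type
  | atom : ℕ → Ty
  | arr : Ty → Lab → Ty → Ty
deriving DecidableEq

/-- Terms `M ::= c | x | λxᵏ:A.M | M Nᵏ` (locally nameless: bound variables
    are de Bruijn indices, free variables/parameters are names). -/
inductive Tm : Type
  | const : ℕ → Tm
  | bvar : ℕ → Tm
  | fvar : ℕ → Tm
  | lam : Lab → Ty → Tm → Tm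
  | app : Tm → Lab → Tm → Tm
deriving DecidableEq

/-- Opening: replace the bound variable `k` by the term `u`. -/
def Tm.openRec (k : ℕ) (u : Tm) : Tm → Tm
  | .const c => .const c
  | .bvar i => if i = k then u else .bvar i
  | .fvar x => .fvar x
  | .lam l A M => .lam l A (Tm.openRec (k+1) u M)
  | .app M l N => .app (Tm.openRec k u M) l (Tm.openRec k u N)

/-- `M.open0 N` is the body `M` of an abstraction with its bound variable
    replaced by `N`; since free variables are named, this is
    capture-avoiding substitution of the bound variable by construction. -/
def Tm.open0 (M u : Tm) : Tm := Tm.openRec 0 u M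

/-- A context zone: a finite set of declarations `x : A`. -/
abbrev Ctx : Type := Finset (ℕ × Ty)

/-- The variables declared in a context. -/
def Ctx.names (Γ : Ctx) : Finset ℕ := Γ.image Prod.fst

/-- The typing judgment `Γ; Ω; Δ ⊢ M : A` of the strict λ-calculus,
    over a fixed signature `Sg` assigning types to constants
    (a function, so each constant is declared at most once). -/
inductive Typ (Sg : ℕ → Option Ty) : Ctx → Ctx → Ctx → Tm → Ty → Prop
  | con {Γ Ω : Ctx} {c : ℕ} {A : Ty} :
      Sg c = some A → Typ Sg Γ Ω ∅ (.const c) A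
  | idu {Γ Ω : Ctx} {x : ℕ} {A : Ty} :
      (x, A) ∈ Γ → Typ Sg Γ Ω ∅ (.fvar x) A
  | id1 {Γ Ω : Ctx} {x : ℕ} {A : Ty} :
      Typ Sg Γ Ω {(x, A)} (.fvar x) A
  | lamu {Γ Ω Δ : Ctx} {x : ℕ} {A B : Ty} {M : Tm} :
      x ∉ Ctx.names (Γ ∪ Ω ∪ Δ) →
      Typ Sg (insert (x, A) Γ) Ω Δ (Tm.open0 M (.fvar x)) B →
      Typ Sg Γ Ω Δ (.lam .un A M) (.arr A .un B)
  | lam0 {Γ Ω Δ : Ctx} {x : ℕ} {A B : Ty} {M : Tm} :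
      x ∉ Ctx.names (Γ ∪ Ω ∪ Δ) →
      Typ Sg Γ (insert (x, A) Ω) Δ (Tm.open0 M (.fvar x)) B →
      Typ Sg Γ Ω Δ (.lam .zero A M) (.arr A .zero B)
  | lam1 {Γ Ω Δ : Ctx} {x : ℕ} {A B : Ty} {M : Tm} :
      x ∉ Ctx.names (Γ ∪ Ω ∪ Δ) →
      Typ Sg Γ Ω (insert (x, A) Δ) (Tm.open0 M (.fvar x)) B →
      Typ Sg Γ Ω Δ (.lam .one A M) (.arr A .one B)
  | appu {Γ Ω Δ : Ctx} {M N : Tm} {A B : Ty} :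
      Typ Sg Γ Ω Δ M (.arr A .un B) →
      Typ Sg (Γ ∪ Δ) Ω ∅ N A →
      Typ Sg Γ Ω Δ (.app M .un N) B
  | app0 {Γ Ω Δ : Ctx} {M N : Tm} {A B : Ty} :
      Typ Sg Γ Ω Δ M (.arr A .zero B) →
      Typ Sg (Γ ∪ Ω ∪ Δ) ∅ ∅ N A →
      Typ Sg Γ Ω Δ (.app M .zero N) B
  | app1 {Γ Ω ΔM ΔN : Ctx} {M N : Tm} {A B : Ty} :
      Disjoint ΔM ΔN →
      Typ Sg (Γ ∪ ΔN) Ω ΔM M (.arr A .one B) →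
      Typ Sg (Γ ∪ ΔM) Ω ΔN N A →
      Typ Sg Γ Ω (ΔM ∪ ΔN) (.app M .one N) B

mutual
  /-- `Γ; Ω; Δ ⊢ M ↓ A` : `M` is atomic of type `A`. -/
  inductive Atom (Sg : ℕ → Option Ty) : Ctx → Ctx → Ctx → Tm → Ty → Prop
    | con {Γ Ω : Ctx} {c : ℕ} {A : Ty} :
        Sg c = some A → Atom Sg Γ Ω ∅ (.const c) A
    | idu {Γ Ω : Ctx} {x : ℕ} {A : Ty} :
        (x, A) ∈ Γ → Atom Sg Γ Ω ∅ (.fvar x) A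
    | id1 {Γ Ω : Ctx} {x : ℕ} {A : Ty} :
        Atom Sg Γ Ω {(x, A)} (.fvar x) A
    | appu {Γ Ω Δ : Ctx} {M N : Tm} {A B : Ty} :
        Atom Sg Γ Ω Δ M (.arr A .un B) →
        Canon Sg (Γ ∪ Δ) Ω ∅ N A →
        Atom Sg Γ Ω Δ (.app M .un N) B
    | app0 {Γ Ω Δ : Ctx} {M N : Tm} {A B : Ty} :
        Atom Sg Γ Ω Δ M (.arr A .zero B) →
        Canon Sg (Γ ∪ Ω ∪ Δ) ∅ ∅ N A →
        Atom Sg Γ Ω Δ (.app M .zero N) B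
    | app1 {Γ Ω ΔM ΔN : Ctx} {M N : Tm} {A B : Ty} :
        Disjoint ΔM ΔN →
        Atom Sg (Γ ∪ ΔN) Ω ΔM M (.arr A .one B) →
        Canon Sg (Γ ∪ ΔM) Ω ΔN N A →
        Atom Sg Γ Ω (ΔM ∪ ΔN) (.app M .one N) B

  /-- `Γ; Ω; Δ ⊢ M ⇑ A` : `M` is canonical of type `A`. -/
  inductive Canon (Sg : ℕ → Option Ty) : Ctx → Ctx → Ctx → Tm → Ty → Prop
    | atm {Γ Ω Δ : Ctx} {M : Tm} {a : ℕ} :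
        Atom Sg Γ Ω Δ M (.atom a) → Canon Sg Γ Ω Δ M (.atom a)
    | lamu {Γ Ω Δ : Ctx} {x : ℕ} {A B : Ty} {M : Tm} :
        x ∉ Ctx.names (Γ ∪ Ω ∪ Δ) →
        Canon Sg (insert (x, A) Γ) Ω Δ (Tm.open0 M (.fvar x)) B →
        Canon Sg Γ Ω Δ (.lam .un A M) (.arr A .un B)
    | lam0 {Γ Ω Δ : Ctx} {x : ℕ} {A B : Ty} {M : Tm} :
        x ∉ Ctx.names (Γ ∪ Ω ∪ Δ) →
        Canon Sg Γ (insert (x, A) Ω) Δ (Tm.open0 M (.fvar x)) B →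
        Canon Sg Γ Ω Δ (.lam .zero A M) (.arr A .zero B)
    | lam1 {Γ Ω Δ : Ctx} {x : ℕ} {A B : Ty} {M : Tm} :
        x ∉ Ctx.names (Γ ∪ Ω ∪ Δ) →
        Canon Sg Γ Ω (insert (x, A) Δ) (Tm.open0 M (.fvar x)) B →
        Canon Sg Γ Ω Δ (.lam .one A M) (.arr A .one B)
end

/- The simply-typed λ-calculus (locally nameless), with its canonical (⇑)
   and atomic (↓) form judgments over a single context, obtained from the
   strict λ-calculus by dropping all labels. -/

inductive STy : Type
  | atom : ℕ → STy
  | arr : STy → STy → STy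
deriving DecidableEq

inductive STm : Type
  | const : ℕ → STm
  | bvar : ℕ → STm
  | fvar : ℕ → STm
  | lam : STy → STm → STm
  | app : STm → STm → STm
deriving DecidableEq

def STm.openRec (k : ℕ) (u : STm) : STm → STm
  | .const c => .const c
  | .bvar i => if i = k then u else .bvar i
  | .fvar x => .fvar x
  | .lam A M => .lam A (STm.openRec (k+1) u M)
  | .app M N => .app (STm.openRec k u M) (STm.openRec k u N)

def STm.open0 (M u : STm) : STm := STm.openRec 0 u M

abbrev SCtx : Type := Finset (ℕ × STy)

def SCtx.names (Γ : SCtx) : Finset ℕ := Γ.image Prod.fst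

mutual
  /-- `Γ ⊢ M ↓ A` in the simply-typed λ-calculus. -/
  inductive SAtom (Sg : ℕ → Option STy) : SCtx → STm → STy → Prop
    | con {Γ : SCtx} {c : ℕ} {A : STy} :
        Sg c = some A → SAtom Sg Γ (.const c) A
    | idv {Γ : SCtx} {x : ℕ} {A : STy} :
        (x, A) ∈ Γ → SAtom Sg Γ (.fvar x) A
    | app {Γ : SCtx} {M N : STm} {A B : STy} :
        SAtom Sg Γ M (.arr A B) → SCanon Sg Γ N A →
        SAtom Sg Γ (.app M N) B

  /-- `Γ ⊢ M ⇑ A` in the simply-typed λ-calculus. -/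
  inductive SCanon (Sg : ℕ → Option STy) : SCtx → STm → STy → Prop
    | atm {Γ : SCtx} {M : STm} {a : ℕ} :
        SAtom Sg Γ M (.atom a) → SCanon Sg Γ M (.atom a)
    | lam {Γ : SCtx} {x : ℕ} {A B : STy} {M : STm} :
        x ∉ SCtx.names Γ →
        SCanon Sg (insert (x, A) Γ) (STm.open0 M (.fvar x)) B →
        SCanon Sg Γ (.lam A M) (.arr A B)
end

mutual
  /-- The type translation `(_)⁻`:  `(A→B)⁻ = A⁺ →ᵘ B⁻`, `a⁻ = a`. -/
  def STy.neg : STy → Ty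
    | .atom a => .atom a
    | .arr A B => .arr (STy.pos A) .un (STy.neg B)
  /-- The type translation `(_)⁺`:  `(A→B)⁺ = A⁻ →¹ B⁺`, `a⁺ = a`. -/
  def STy.pos : STy → Ty
    | .atom a => .atom a
    | .arr A B => .arr (STy.neg A) .one (STy.pos B)
end

/-- The term translation.  On the relevant (canonical/atomic) terms the two
    mutually recursive translations `(_)⁻` and `(_)⁺` of the paper coincide
    with this single function:  `(λx:A.M)⁻ = λxᵘ:A⁺.M⁻`, `M⁻ = M⁺` at base
    type, `x⁺ = x`, `c⁺ = c`, and `(M N)⁺ = M⁺ (N⁻)¹`. -/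
def STm.trans : STm → Tm
  | .const c => .const c
  | .bvar i => .bvar i
  | .fvar x => .fvar x
  | .lam A M => .lam .un (STy.pos A) (STm.trans M)
  | .app M N => .app (STm.trans M) .one (STm.trans N)

/-- `M⁻`, the translation of a canonical term. -/
def STm.negT : STm → Tm := STm.trans

/-- `M⁺`, the translation of an atomic term. -/
def STm.posT : STm → Tm := STm.trans

/-- `Γ⁺`: contexts are translated declaration-wise by `(_)⁺`. -/
def SCtx.pos (Γ : SCtx) : Ctx := Γ.image fun p => (p.1, STy.pos p.2)

/-- `Σ⁺`: signatures are translated declaration-wise by `(_)⁺`. -/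
def sigPosStrict (Sg : ℕ → Option STy) : ℕ → Option Ty := fun c => (Sg c).map STy.pos

lemma trans_openRec (k : ℕ) (u M : STm) :
    STm.trans (STm.openRec k u M) = Tm.openRec k (STm.trans u) (STm.trans M) := by
  induction M generalizing k with
  | const c => rfl
  | bvar i =>
      simp only [STm.openRec, STm.trans, Tm.openRec]
      split <;> rfl
  | fvar x => rfl
  | lam A M ih => simp [STm.openRec, STm.trans, Tm.openRec, ih]
  | app M N ihM ihN => simp [STm.openRec, STm.trans, Tm.openRec, ihM, ihN]

lemma trans_open0 (M : STm) (x : ℕ) :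
    STm.trans (STm.open0 M (.fvar x)) = Tm.open0 (STm.trans M) (.fvar x) :=
  trans_openRec 0 _ M

lemma pos_insert (x : ℕ) (A : STy) (Γ : SCtx) :
    SCtx.pos (insert (x, A) Γ) = insert (x, STy.pos A) (SCtx.pos Γ) := by
  simp [SCtx.pos, Finset.image_insert]

lemma names_pos (Γ : SCtx) : Ctx.names (SCtx.pos Γ) = SCtx.names Γ := by
  simp [Ctx.names, SCtx.pos, SCtx.names, Finset.image_image]
  rfl

/-- **Correctness of the embedding** of the simply-typed λ-calculus into the
    strict λ-calculus:
    (1) if `Γ ⊢ M ⇑ A` (simply-typed), then `Γ⁺; ·; · ⊢ M⁻ ⇑ A⁻` (strict);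
    (2) if `Γ ⊢ M ↓ A` (simply-typed), then `Γ⁺; ·; · ⊢ M⁺ ↓ A⁺` (strict). -/
theorem embedding_correct (Sg : ℕ → Option STy) :
    (∀ (Γ : SCtx) (M : STm) (A : STy),
      SCanon Sg Γ M A →
      Canon (sigPosStrict Sg) (SCtx.pos Γ) ∅ ∅ (STm.negT M) (STy.neg A)) ∧
    (∀ (Γ : SCtx) (M : STm) (A : STy),
      SAtom Sg Γ M A →
      Atom (sigPosStrict Sg) (SCtx.pos Γ) ∅ ∅ (STm.posT M) (STy.pos A)) := by

  have hcon : ∀ {Γ : SCtx} {c : ℕ} {A : STy}, Sg c = some A →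
      Atom (sigPosStrict Sg) (SCtx.pos Γ) ∅ ∅ (STm.trans (.const c)) (STy.pos A) := by
    intro Γ c A h
    exact Atom.con (by simp [sigPosStrict, h])
  have hid : ∀ {Γ : SCtx} {x : ℕ} {A : STy}, (x, A) ∈ Γ →
      Atom (sigPosStrict Sg) (SCtx.pos Γ) ∅ ∅ (STm.trans (.fvar x)) (STy.pos A) := by
    intro Γ x A h
    exact Atom.idu (Finset.mem_image.mpr ⟨(x, A), h, rfl⟩)
  have happ : ∀ {Γ : SCtx} {M N : STm} {A B : STy},
      SAtom Sg Γ M (A.arr B) → SCanon Sg Γ N A →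
      Atom (sigPosStrict Sg) (SCtx.pos Γ) ∅ ∅ (STm.trans M) (STy.pos (A.arr B)) →
      Canon (sigPosStrict Sg) (SCtx.pos Γ) ∅ ∅ (STm.trans N) (STy.neg A) →
      Atom (sigPosStrict Sg) (SCtx.pos Γ) ∅ ∅ (STm.trans (M.app N)) (STy.pos B) := by
    intro Γ M N A B _ _ ihM ihN
    have := Atom.app1 (Sg := sigPosStrict Sg) (ΔM := ∅) (ΔN := ∅)
      (Finset.disjoint_empty_left _) (by simpa [STy.pos] using ihM) (by simpa using ihN)
    simpa [STm.trans] using this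
  have hatm : ∀ {Γ : SCtx} {M : STm} {a : ℕ},
      SAtom Sg Γ M (STy.atom a) →
      Atom (sigPosStrict Sg) (SCtx.pos Γ) ∅ ∅ (STm.trans M) (STy.pos (STy.atom a)) →
      Canon (sigPosStrict Sg) (SCtx.pos Γ) ∅ ∅ (STm.trans M) (STy.neg (STy.atom a)) := by
    intro Γ M a _ ih
    exact Canon.atm ih
  have hlam : ∀ {Γ : SCtx} {x : ℕ} {A B : STy} {M : STm},
      x ∉ SCtx.names Γ →
      SCanon Sg (insert (x, A) Γ) (M.open0 (STm.fvar x)) B →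
      Canon (sigPosStrict Sg) (SCtx.pos (insert (x, A) Γ)) ∅ ∅
        (STm.trans (M.open0 (STm.fvar x))) (STy.neg B) →
      Canon (sigPosStrict Sg) (SCtx.pos Γ) ∅ ∅ (STm.trans (STm.lam A M)) (STy.neg (A.arr B)) := by
    intro Γ x A B M hx _ ih
    refine Canon.lamu (x := x) ?_ ?_
    · simpa [names_pos] using hx
    · rw [pos_insert, trans_open0] at ih
      exact ih
  exact ⟨fun Γ M A h => SCanon.rec (Sg := Sg)
      (motive_1 := fun Γ M A _ => Atom (sigPosStrict Sg) (SCtx.pos Γ) ∅ ∅ (STm.trans M) (STy.pos A))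
      (motive_2 := fun Γ M A _ => Canon (sigPosStrict Sg) (SCtx.pos Γ) ∅ ∅ (STm.trans M) (STy.neg A))
      hcon hid (fun a b ih1 ih2 => happ a b ih1 ih2) (fun a ih => hatm a ih)
      (fun a b ih => hlam a b ih) h,
    fun Γ M A h => SAtom.rec (Sg := Sg)
      (motive_1 := fun Γ M A _ => Atom (sigPosStrict Sg) (SCtx.pos Γ) ∅ ∅ (STm.trans M) (STy.pos A))
      (motive_2 := fun Γ M A _ => Canon (sigPosStrict Sg) (SCtx.pos Γ) ∅ ∅ (STm.trans M) (STy.neg A))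
      hcon hid (fun a b ih1 ih2 => happ a b ih1 ih2) (fun a ih => hatm a ih)
      (fun a b ih => hlam a b ih) h⟩
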